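/- arXiv:math/0610036 — 7 statements merged into one kernel-verified Lean document; each statement's English description precedes it below -/
import Mathlib

section
/- Let n, ℓ, a be positive integers such that 2 ≤ n − ℓ ≤ a^ℓ. Then m(n, n−1) ≤ 2^ℓ + ℓ·a, i.e., there exists a hypergraph on n vertices in which every line consists of at most n−1 vertices and which has at most 2^ℓ + ℓ·a distinct lines. -/
open Finset

/-- The line determined by two vertices `u`, `v` in a hypergraph with edge set `H`:
`{u, v} ∪ {p : ∃ T ∈ H, {u, v, p} ⊆ T}`. -/
def hline {V : Type*} [Fintype V] [DecidableEq V] (H : Finset (Finset V)) (u v : V) :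
    Finset V :=
  {u, v} ∪ Finset.univ.filter (fun p => ∃ T ∈ H, ({u, v, p} : Finset V) ⊆ T)

/-- The set of all lines of a hypergraph. -/
def hlines {V : Type*} [Fintype V] [DecidableEq V] (H : Finset (Finset V)) :
    Finset (Finset V) :=
  ((Finset.univ ×ˢ Finset.univ).filter (fun p : V × V => p.1 ≠ p.2)).image
    (fun p => hline H p.1 p.2)

/-- `mValue n k` is the smallest number of distinct lines in a hypergraph on `n`
vertices in which every line consists of at most `k` vertices. -/
noncomputable def mValue (n k : ℕ) : ℕ :=
  sInf { m | ∃ H : Finset (Finset (Fin n)),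
    (∀ u v : Fin n, u ≠ v → (hline H u v).card ≤ k) ∧ (hlines H).card = m }



lemma mem_hline {V : Type*} [Fintype V] [DecidableEq V] {H : Finset (Finset V)} {u v p : V} :
    p ∈ hline H u v ↔ p = u ∨ p = v ∨ ∃ T ∈ H, ({u, v, p} : Finset V) ⊆ T := by
  simp [hline, or_assoc]

lemma hline_comm {V : Type*} [Fintype V] [DecidableEq V] (H : Finset (Finset V)) (u v : V) :
    hline H u v = hline H v u := by
  ext p
  simp only [mem_hline]
  constructor <;> rintro (h|h|⟨T,hT,hs⟩)
  · exact Or.inr (Or.inl h)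
  · exact Or.inl h
  · exact Or.inr (Or.inr ⟨T, hT, by rwa [Finset.insert_comm] at hs⟩)
  · exact Or.inr (Or.inl h)
  · exact Or.inl h
  · exact Or.inr (Or.inr ⟨T, hT, by rwa [Finset.insert_comm] at hs⟩)

lemma hline_image_equiv {V W : Type*} [Fintype V] [DecidableEq V] [Fintype W] [DecidableEq W]
    (e : V ≃ W) (H : Finset (Finset V)) (u v : V) :
    hline (H.image (Finset.image e)) (e u) (e v) = (hline H u v).image e := by
  ext w
  obtain ⟨p, rfl⟩ := e.surjective w
  have key : ∀ T : Finset V, ({e u, e v, e p} : Finset W) ⊆ T.image e ↔ ({u,v,p} : Finset V) ⊆ T := by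
    intro T
    have : ({e u, e v, e p} : Finset W) = ({u,v,p} : Finset V).image e := by
      simp [Finset.image_insert]
    rw [this, Finset.image_subset_image_iff e.injective]
  simp only [mem_hline, Finset.mem_image, e.injective.eq_iff]
  constructor
  · rintro (h|h|⟨T', ⟨T, hT, rfl⟩, hs⟩)
    · exact ⟨u, Or.inl rfl, h.symm ▸ rfl⟩
    · exact ⟨v, Or.inr (Or.inl rfl), h.symm ▸ rfl⟩
    · exact ⟨p, Or.inr (Or.inr ⟨T, hT, (key T).1 hs⟩), rfl⟩
  · rintro ⟨q, hq, he⟩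
    subst he
    rcases hq with h|h|⟨T,hT,hs⟩
    · exact Or.inl (by rw [h])
    · exact Or.inr (Or.inl (by rw [h]))
    · exact Or.inr (Or.inr ⟨T.image e, ⟨T, hT, rfl⟩, (key T).2 hs⟩)

section Construction

variable {k ℓ a : ℕ}

/-- The edge set of the construction. -/
def goodEdges (φ : Fin k ↪ (Fin ℓ → Fin a)) : Finset (Finset (Fin k ⊕ Fin ℓ)) :=
  Finset.univ.filter (fun T =>
    (∀ x ∈ T, x.isLeft) ∨ (∀ x ∈ T, x.isRight) ∨
    ∃ u v i, φ u i = φ v i ∧ T = {Sum.inl u, Sum.inl v, Sum.inr i})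

lemma mem_goodEdges {φ : Fin k ↪ (Fin ℓ → Fin a)} {T : Finset (Fin k ⊕ Fin ℓ)} :
    T ∈ goodEdges φ ↔
    (∀ x ∈ T, x.isLeft) ∨ (∀ x ∈ T, x.isRight) ∨
    ∃ u v i, φ u i = φ v i ∧ T = {Sum.inl u, Sum.inl v, Sum.inr i} := by
  simp [goodEdges]

lemma hline_ll (φ : Fin k ↪ (Fin ℓ → Fin a)) {u v : Fin k} (huv : u ≠ v) :
    hline (goodEdges φ) (Sum.inl u) (Sum.inl v) =
      (Finset.univ.image Sum.inl) ∪
        ((Finset.univ.filter fun i => φ u i = φ v i).image Sum.inr) := by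
  ext x
  rw [mem_hline]
  constructor
  · rintro (rfl|rfl|⟨T, hT, hs⟩)
    · simp
    · simp
    · rw [mem_goodEdges] at hT
      have hu : Sum.inl u ∈ T := hs (by simp)
      have hx : x ∈ T := hs (by simp)
      rcases hT with h|h|⟨u', v', i', hφ, rfl⟩
      · obtain ⟨w, rfl⟩ := Sum.isLeft_iff.mp (h _ hx)
        simp
      · exact absurd (h _ hu) (by simp)
      · have hv : Sum.inl v ∈ ({Sum.inl u', Sum.inl v', Sum.inr i'} : Finset (Fin k ⊕ Fin ℓ)) :=
          hs (by simp)
        simp only [Finset.mem_insert, Finset.mem_singleton, Sum.inl.injEq, reduceCtorEq,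
          or_false] at hu hv
        simp only [Finset.mem_insert, Finset.mem_singleton] at hx
        rcases hx with rfl|rfl|rfl
        · simp
        · simp
        · simp only [Finset.mem_union, Finset.mem_image, Finset.mem_filter, Finset.mem_univ,
            true_and, reduceCtorEq, exists_false, false_or, Sum.inr.injEq]
          refine ⟨i', ?_, rfl⟩
          rcases hu with rfl|rfl <;> rcases hv with rfl|rfl
          · exact absurd rfl huv
          · exact hφ
          · exact hφ.symm
          · exact absurd rfl huv
  · intro hx
    simp only [Finset.mem_union, Finset.mem_image, Finset.mem_filter, Finset.mem_univ,
      true_and] at hx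
    rcases hx with ⟨w, rfl⟩ | ⟨i, hi, rfl⟩
    · refine Or.inr (Or.inr ⟨{Sum.inl u, Sum.inl v, Sum.inl w}, ?_, Finset.Subset.refl _⟩)
      rw [mem_goodEdges]
      refine Or.inl fun x hx => ?_
      simp only [Finset.mem_insert, Finset.mem_singleton] at hx
      rcases hx with rfl|rfl|rfl <;> rfl
    · refine Or.inr (Or.inr ⟨{Sum.inl u, Sum.inl v, Sum.inr i}, ?_, Finset.Subset.refl _⟩)
      rw [mem_goodEdges]
      exact Or.inr (Or.inr ⟨u, v, i, hi, rfl⟩)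

lemma hline_rr (φ : Fin k ↪ (Fin ℓ → Fin a)) {i j : Fin ℓ} (hij : i ≠ j) :
    hline (goodEdges φ) (Sum.inr i) (Sum.inr j) = Finset.univ.image Sum.inr := by
  ext x
  rw [mem_hline]
  constructor
  · rintro (rfl|rfl|⟨T, hT, hs⟩)
    · simp
    · simp
    · rw [mem_goodEdges] at hT
      have hi : (Sum.inr i : Fin k ⊕ Fin ℓ) ∈ T := hs (by simp)
      have hx : x ∈ T := hs (by simp)
      rcases hT with h|h|⟨u', v', i', hφ, rfl⟩
      · exact absurd (h _ hi) (by simp)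
      · obtain ⟨m, rfl⟩ := Sum.isRight_iff.mp (h _ hx)
        simp
      · have hj : (Sum.inr j : Fin k ⊕ Fin ℓ) ∈ ({Sum.inl u', Sum.inl v', Sum.inr i'} :
            Finset (Fin k ⊕ Fin ℓ)) := hs (by simp)
        simp only [Finset.mem_insert, Finset.mem_singleton, Sum.inr.injEq, reduceCtorEq,
          false_or] at hi hj
        exact absurd (hi.trans hj.symm) hij
  · intro hx
    simp only [Finset.mem_image, Finset.mem_univ, true_and] at hx
    obtain ⟨m, rfl⟩ := hx
    refine Or.inr (Or.inr ⟨{Sum.inr i, Sum.inr j, Sum.inr m}, ?_, Finset.Subset.refl _⟩)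
    rw [mem_goodEdges]
    refine Or.inr (Or.inl fun x hx => ?_)
    simp only [Finset.mem_insert, Finset.mem_singleton] at hx
    rcases hx with rfl|rfl|rfl <;> rfl

lemma hline_lr (φ : Fin k ↪ (Fin ℓ → Fin a)) (u : Fin k) (i : Fin ℓ) :
    hline (goodEdges φ) (Sum.inl u) (Sum.inr i) =
      {Sum.inr i} ∪ ((Finset.univ.filter fun v => φ v i = φ u i).image Sum.inl) := by
  ext x
  rw [mem_hline]
  constructor
  · rintro (rfl|rfl|⟨T, hT, hs⟩)
    · simp
    · simp
    · rw [mem_goodEdges] at hT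
      have hu : Sum.inl u ∈ T := hs (by simp)
      have hi : (Sum.inr i : Fin k ⊕ Fin ℓ) ∈ T := hs (by simp)
      have hx : x ∈ T := hs (by simp)
      rcases hT with h|h|⟨u', v', i', hφ, rfl⟩
      · exact absurd (h _ hi) (by simp)
      · exact absurd (h _ hu) (by simp)
      · simp only [Finset.mem_insert, Finset.mem_singleton, Sum.inl.injEq, Sum.inr.injEq,
          reduceCtorEq, or_false, false_or] at hu hi
        subst hi
        simp only [Finset.mem_insert, Finset.mem_singleton] at hx
        rcases hx with rfl|rfl|rfl
        · simp only [Finset.mem_union, Finset.mem_singleton, Finset.mem_image,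
            Finset.mem_filter, Finset.mem_univ, true_and, reduceCtorEq, false_or,
            Sum.inl.injEq]
          rcases hu with rfl|rfl <;>
            exact ⟨_, by first | rfl | exact hφ | exact hφ.symm, rfl⟩
        · simp only [Finset.mem_union, Finset.mem_singleton, Finset.mem_image,
            Finset.mem_filter, Finset.mem_univ, true_and, reduceCtorEq, false_or,
            Sum.inl.injEq]
          rcases hu with rfl|rfl <;>
            exact ⟨_, by first | rfl | exact hφ | exact hφ.symm, rfl⟩
        · simp
  · intro hx
    simp only [Finset.mem_union, Finset.mem_singleton, Finset.mem_image, Finset.mem_filter,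
      Finset.mem_univ, true_and] at hx
    rcases hx with rfl | ⟨w, hw, rfl⟩
    · exact Or.inr (Or.inl rfl)
    · refine Or.inr (Or.inr ⟨{Sum.inl u, Sum.inl w, Sum.inr i}, ?_, ?_⟩)
      · rw [mem_goodEdges]
        exact Or.inr (Or.inr ⟨u, w, i, hw.symm, rfl⟩)
      · intro x hx
        simp only [Finset.mem_insert, Finset.mem_singleton] at hx ⊢
        tauto

end Construction

section Counting

variable {k ℓ a : ℕ}

lemma card_hline_lr_le (φ : Fin k ↪ (Fin ℓ → Fin a)) (hk : 2 ≤ k) (u : Fin k) (i : Fin ℓ) :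
    (hline (goodEdges φ) (Sum.inl u) (Sum.inr i)).card ≤ k + ℓ - 1 := by
  rw [hline_lr φ u i]
  have hd : Disjoint ({Sum.inr i} : Finset (Fin k ⊕ Fin ℓ))
      ((Finset.univ.filter fun v => φ v i = φ u i).image Sum.inl) := by
    rw [Finset.disjoint_left]
    rintro z hz hz'
    simp only [Finset.mem_singleton] at hz
    subst hz
    simp only [Finset.mem_image] at hz'
    obtain ⟨w, _, h⟩ := hz'
    exact absurd h (by simp)
  rw [Finset.card_union_of_disjoint hd, Finset.card_singleton,
    Finset.card_image_of_injective _ Sum.inl_injective]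
  rcases Nat.lt_or_ge ℓ 2 with hℓ | hℓ
  · -- ℓ = 1
    have hsub : (Finset.univ.filter fun v => φ v i = φ u i) ⊆ {u} := by
      intro v hv
      simp only [Finset.mem_filter, Finset.mem_univ, true_and] at hv
      simp only [Finset.mem_singleton]
      apply φ.injective
      funext j
      have hj : j = i := by omega
      rw [hj]; exact hv
    have := Finset.card_le_card hsub
    simp only [Finset.card_singleton] at this
    have hℓ1 : 1 ≤ ℓ := i.pos
    omega
  · have := Finset.card_filter_le Finset.univ (fun v => φ v i = φ u i)
    rw [Finset.card_univ, Fintype.card_fin] at this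
    omega

lemma card_hline_le (φ : Fin k ↪ (Fin ℓ → Fin a)) (hk : 2 ≤ k) {x y : Fin k ⊕ Fin ℓ}
    (hxy : x ≠ y) : (hline (goodEdges φ) x y).card ≤ k + ℓ - 1 := by
  have hdisj : ∀ (A : Finset (Fin k)) (B : Finset (Fin ℓ)),
      Disjoint (A.image (Sum.inl : Fin k → Fin k ⊕ Fin ℓ)) (B.image Sum.inr) := by
    intro A B
    rw [Finset.disjoint_left]
    rintro z hz hz'
    simp only [Finset.mem_image] at hz hz'
    obtain ⟨w, _, rfl⟩ := hz
    obtain ⟨m, _, h⟩ := hz'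
    exact absurd h (by simp)
  match x, y with
  | Sum.inl u, Sum.inl v =>
      have huv : u ≠ v := fun h => hxy (by rw [h])
      rw [hline_ll φ huv, Finset.card_union_of_disjoint (hdisj _ _),
        Finset.card_image_of_injective _ Sum.inl_injective,
        Finset.card_image_of_injective _ Sum.inr_injective, Finset.card_univ,
        Fintype.card_fin]
      have hne : (Finset.univ.filter fun i => φ u i = φ v i) ≠ Finset.univ := by
        intro h
        apply huv
        apply φ.injective
        funext i
        have : i ∈ (Finset.univ.filter fun i => φ u i = φ v i) := by
          rw [h]; exact Finset.mem_univ i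
        exact (Finset.mem_filter.mp this).2
      have := Finset.card_lt_card (Finset.ssubset_univ_iff.mpr hne)
      rw [Finset.card_univ, Fintype.card_fin] at this
      omega
  | Sum.inr i, Sum.inr j =>
      have hij : i ≠ j := fun h => hxy (by rw [h])
      rw [hline_rr φ hij, Finset.card_image_of_injective _ Sum.inr_injective,
        Finset.card_univ, Fintype.card_fin]
      omega
  | Sum.inl u, Sum.inr i =>
      exact card_hline_lr_le φ hk u i
  | Sum.inr i, Sum.inl u =>
      rw [hline_comm]
      exact card_hline_lr_le φ hk u i

/-- The classifying function of the construction's lines. -/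
def gfun (φ : Fin k ↪ (Fin ℓ → Fin a)) : Finset (Fin ℓ) ⊕ (Fin ℓ × Fin a) →
    Finset (Fin k ⊕ Fin ℓ)
  | Sum.inl S =>
      if S = Finset.univ then Finset.univ.image Sum.inr
      else (Finset.univ.image Sum.inl) ∪ S.image Sum.inr
  | Sum.inr (i, t) => {Sum.inr i} ∪ ((Finset.univ.filter fun v => φ v i = t).image Sum.inl)

lemma exists_gfun (φ : Fin k ↪ (Fin ℓ → Fin a)) {x y : Fin k ⊕ Fin ℓ} (hxy : x ≠ y) :
    ∃ t, hline (goodEdges φ) x y = gfun φ t := by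
  match x, y with
  | Sum.inl u, Sum.inl v =>
      have huv : u ≠ v := fun h => hxy (by rw [h])
      refine ⟨Sum.inl (Finset.univ.filter fun i => φ u i = φ v i), ?_⟩
      have hne : (Finset.univ.filter fun i => φ u i = φ v i) ≠ Finset.univ := by
        intro h
        apply huv
        apply φ.injective
        funext i
        have : i ∈ (Finset.univ.filter fun i => φ u i = φ v i) := by
          rw [h]; exact Finset.mem_univ i
        exact (Finset.mem_filter.mp this).2
      rw [hline_ll φ huv, gfun, if_neg hne]
  | Sum.inr i, Sum.inr j =>
      have hij : i ≠ j := fun h => hxy (by rw [h])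
      exact ⟨Sum.inl Finset.univ, by rw [hline_rr φ hij, gfun, if_pos rfl]⟩
  | Sum.inl u, Sum.inr i =>
      exact ⟨Sum.inr (i, φ u i), by rw [hline_lr φ u i, gfun]⟩
  | Sum.inr i, Sum.inl u =>
      exact ⟨Sum.inr (i, φ u i), by rw [hline_comm, hline_lr φ u i, gfun]⟩

end Counting


/-- If `n, ℓ, a` are positive integers with `2 ≤ n - ℓ ≤ a ^ ℓ`, then
`m(n, n-1) ≤ 2 ^ ℓ + ℓ * a`. -/
theorem stmt_0 (n ℓ a : ℕ) (hn : 0 < n) (hℓ : 0 < ℓ) (ha : 0 < a)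
    (h1 : 2 ≤ n - ℓ) (h2 : n - ℓ ≤ a ^ ℓ) :
    mValue n (n - 1) ≤ 2 ^ ℓ + ℓ * a := by
  have hℓn : ℓ + 2 ≤ n := by omega
  set k := n - ℓ with hk
  have hk2 : 2 ≤ k := h1
  obtain ⟨φ⟩ : Nonempty (Fin k ↪ (Fin ℓ → Fin a)) := by
    apply Function.Embedding.nonempty_of_card_le
    simpa using h2
  have e : (Fin k ⊕ Fin ℓ) ≃ Fin n := finSumFinEquiv.trans (finCongr (by omega))
  set H : Finset (Finset (Fin n)) := (goodEdges φ).image (Finset.image e) with hH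
  have hcard : ∀ u v : Fin n, u ≠ v → (hline H u v).card ≤ n - 1 := by
    intro u v huv
    obtain ⟨u', rfl⟩ := e.surjective u
    obtain ⟨v', rfl⟩ := e.surjective v
    rw [hH, hline_image_equiv, Finset.card_image_of_injective _ e.injective]
    have := card_hline_le φ hk2 (x := u') (y := v') (fun h => huv (by rw [h]))
    omega
  have hsub : hlines H ⊆ Finset.univ.image (fun t => (gfun φ t).image e) := by
    intro L hL
    rw [hlines, Finset.mem_image] at hL
    obtain ⟨⟨u, v⟩, hp, rfl⟩ := hL
    simp only [Finset.mem_filter, Finset.mem_product, Finset.mem_univ, true_and] at hp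
    obtain ⟨u', rfl⟩ := e.surjective u
    obtain ⟨v', rfl⟩ := e.surjective v
    obtain ⟨t, ht⟩ := exists_gfun φ (x := u') (y := v') (fun h => hp (by rw [h]))
    rw [hH, hline_image_equiv, ht]
    exact Finset.mem_image_of_mem _ (Finset.mem_univ t)
  have hcount : (hlines H).card ≤ 2 ^ ℓ + ℓ * a := by
    calc (hlines H).card ≤ (Finset.univ.image (fun t => (gfun φ t).image e)).card :=
          Finset.card_le_card hsub
      _ ≤ Fintype.card (Finset (Fin ℓ) ⊕ (Fin ℓ × Fin a)) := by
          rw [← Finset.card_univ]; exact Finset.card_image_le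
      _ = 2 ^ ℓ + ℓ * a := by
          simp [Fintype.card_sum, Fintype.card_finset, Fintype.card_prod]
  exact le_trans (Nat.sInf_le ⟨H, hcard, rfl⟩) hcount
end

section
/- Let (X, H) be a hypergraph on n vertices in which no line consists of all n vertices. Then for every two distinct vertices u and v of X, there is a line which includes u and does not include v. -/
open Finset

/-- In a hypergraph in which no line consists of all the vertices, for every two
distinct vertices `u` and `v` there is a line which includes `u` but not `v`. -/
theorem stmt_3 {V : Type*} [Fintype V] [DecidableEq V] (H : Finset (Finset V))
    (hno : ∀ u v : V, u ≠ v → hline H u v ≠ Finset.univ) :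
    ∀ u v : V, u ≠ v →
      ∃ a b : V, a ≠ b ∧ u ∈ hline H a b ∧ v ∉ hline H a b := by
  intro u v huv
  obtain ⟨w, hw⟩ : ∃ w, w ∉ hline H u v := by
    by_contra hc
    push_neg at hc
    exact hno u v huv (Finset.eq_univ_iff_forall.mpr hc)
  simp only [hline, mem_union, mem_insert, mem_singleton, mem_filter, mem_univ,
    true_and, not_or, not_exists] at hw
  obtain ⟨⟨hwu, hwv⟩, hwT⟩ := hw
  have huw : u ≠ w := fun h => hwu h.symm
  refine ⟨u, w, huw, by simp [hline], ?_⟩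
  intro hv
  simp only [hline, mem_union, mem_insert, mem_singleton, mem_filter, mem_univ,
    true_and] at hv
  rcases hv with (h | h) | ⟨T, hT, hsub⟩
  · exact huv h.symm
  · exact hwv h.symm
  · exact hwT T ⟨hT, by
      intro x hx
      simp only [mem_insert, mem_singleton] at hx
      rcases hx with rfl | rfl | rfl
      · exact hsub (by simp)
      · exact hsub (by simp)
      · exact hsub (by simp)⟩
end

section
/- Let (X, H) be a hypergraph on n vertices in which no line consists of all n vertices, and suppose the hypergraph has exactly m distinct lines. For each vertex x, let S_x be the set of all lines that include x. Then the sets S_x (x ∈ X) are n pairwise distinct sets forming an antichain (none of them is a subset of another), and consequently n ≤ C(m, ⌊m/2⌋). -/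
open Finset

/-!
If the line `xy` is not everything, pick `z` off it. The line `xz` contains `x`
but not `y`, since collinearity of `x, z, y` is symmetric and would put `z` on `xy`. So every
vertex is separated from every other one by a line, the sets `S x` form an antichain of subsets
of the `m` lines, and Sperner's theorem bounds their number.
-/

section Hypergraph

variable {V : Type*} [Fintype V] [DecidableEq V] (H : Finset (Finset V))

lemma mem_hline_left (u v : V) : u ∈ hline H u v := by
  simp [hline]

lemma hline_mem_hlines {u v : V} (huv : u ≠ v) : hline H u v ∈ hlines H :=
  mem_image.2 ⟨(u, v), by simp [huv], rfl⟩

lemma mem_hline_swap {x y z : V} (hy : y ∈ hline H x z) (hyx : y ≠ x) : z ∈ hline H x y := by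
  simp only [hline, mem_union, mem_insert, mem_singleton, mem_filter, mem_univ,
    true_and] at hy ⊢
  rcases hy with (rfl | rfl) | ⟨T, hT, hsub⟩
  · exact absurd rfl hyx
  · exact Or.inl (Or.inr rfl)
  · refine Or.inr ⟨T, hT, subset_trans ?_ hsub⟩
    intro a
    simp only [mem_insert, mem_singleton]
    tauto

lemma exists_mem_hlines_mem_not_mem {x y : V} (hxy : x ≠ y) (hne : hline H x y ≠ univ) :
    ∃ L ∈ hlines H, x ∈ L ∧ y ∉ L := by
  obtain ⟨z, hz⟩ : ∃ z, z ∉ hline H x y := by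
    simpa [eq_univ_iff_forall] using hne
  have hzx : z ≠ x := by
    rintro rfl
    exact hz (mem_hline_left H z y)
  exact ⟨hline H x z, hline_mem_hlines H hzx.symm, mem_hline_left H x z,
    fun hy => hz (mem_hline_swap H hy hxy.symm)⟩

end Hypergraph

lemma Fintype.card_le_choose_of_not_subset {ι V : Type*} [Fintype ι] [Fintype V]
    (f : V → Finset ι) (hf : ∀ x y, x ≠ y → ¬ f x ⊆ f y) :
    Fintype.card V ≤ (Fintype.card ι).choose (Fintype.card ι / 2) := by
  classical
  have hinj : Function.Injective f := fun x y hfxy => by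
    by_contra hxy
    exact hf x y hxy hfxy.subset
  have hanti : IsAntichain (· ⊆ ·) ((univ.image f : Finset (Finset ι)) : Set (Finset ι)) := by
    rintro _ hA _ hB hne
    simp only [coe_image, coe_univ, Set.image_univ, Set.mem_range] at hA hB
    obtain ⟨x, rfl⟩ := hA
    obtain ⟨y, rfl⟩ := hB
    exact hf x y (fun h => hne (congrArg f h))
  calc Fintype.card V = (univ.image f).card := by rw [card_image_of_injective _ hinj, card_univ]
    _ ≤ _ := hanti.sperner

lemma Fintype.card_le_choose_of_separating {V : Type*} [Fintype V] [DecidableEq V]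
    (𝓛 : Finset (Finset V)) (hsep : ∀ x y, x ≠ y → ∃ L ∈ 𝓛, x ∈ L ∧ y ∉ L) :
    Fintype.card V ≤ (#𝓛).choose (#𝓛 / 2) := by
  have h := Fintype.card_le_choose_of_not_subset (fun x => 𝓛.attach.filter (fun L => x ∈ L.1))
    fun x y hxy hsub => by
      obtain ⟨L, hL, hxL, hyL⟩ := hsep x y hxy
      exact hyL (mem_filter.1 (hsub (mem_filter.2 ⟨mem_attach 𝓛 ⟨L, hL⟩, hxL⟩))).2
  rwa [Fintype.card_coe] at h

/-- In a hypergraph on `n` vertices with `m` lines in which no line consists of all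
the vertices, the sets `S x` of lines through a vertex `x` are pairwise distinct and
form an antichain; consequently `n ≤ C(m, ⌊m/2⌋)`. -/
theorem stmt_4 {V : Type*} [Fintype V] [DecidableEq V] (H : Finset (Finset V))
    (n m : ℕ) (hn : Fintype.card V = n)
    (hno : ∀ u v : V, u ≠ v → hline H u v ≠ Finset.univ)
    (hm : (hlines H).card = m)
    (S : V → Finset (Finset V))
    (hS : ∀ x : V, S x = (hlines H).filter (fun L => x ∈ L)) :
    (∀ x y : V, x ≠ y → S x ≠ S y) ∧
    (∀ x y : V, x ≠ y → ¬ S x ⊆ S y) ∧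
    n ≤ m.choose (m / 2) := by
  have hsep x y (hxy : x ≠ y) := exists_mem_hlines_mem_not_mem H hxy (hno x y hxy)
  have hanti : ∀ x y : V, x ≠ y → ¬ S x ⊆ S y := by
    intro x y hxy hsub
    obtain ⟨L, hL, hxL, hyL⟩ := hsep x y hxy
    have hLy : L ∈ S y := hsub (by rw [hS]; exact mem_filter.2 ⟨hL, hxL⟩)
    rw [hS] at hLy
    exact hyL (mem_filter.1 hLy).2
  refine ⟨fun x y hxy h => hanti x y hxy h.subset, hanti, ?_⟩
  rw [← hn, ← hm]
  exact Fintype.card_le_choose_of_separating (hlines H) hsep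
end

section
/- For all integers n ≥ k ≥ 2, m(n, k) ≤ C(n, 2) − f(n, k)·(C(k, 2) − 1), where f(n, k) is the largest number of edges in a k-uniform hypergraph on n vertices in which every two distinct edges share at most one vertex. -/
open Finset

/-- `fValue n k` is the largest number of edges in a `k`-uniform hypergraph on `n`
vertices in which every two distinct edges share at most one vertex. -/
noncomputable def fValue (n k : ℕ) : ℕ :=
  sSup { m | ∃ H : Finset (Finset (Fin n)),
    (∀ T ∈ H, T.card = k) ∧
    (∀ T₁ ∈ H, ∀ T₂ ∈ H, T₁ ≠ T₂ → (T₁ ∩ T₂).card ≤ 1) ∧ H.card = m }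

lemma hline_eq_of_mem {V : Type*} [Fintype V] [DecidableEq V] {H : Finset (Finset V)}
    (hlin : ∀ T₁ ∈ H, ∀ T₂ ∈ H, T₁ ≠ T₂ → (T₁ ∩ T₂).card ≤ 1)
    {u v : V} (huv : u ≠ v) {T : Finset V} (hT : T ∈ H) (hu : u ∈ T) (hv : v ∈ T) :
    hline H u v = T := by
  ext p
  simp only [hline, mem_union, mem_filter, mem_univ, true_and, mem_insert, mem_singleton]
  constructor
  · rintro ((rfl | rfl) | ⟨T', hT', hsub⟩)
    · exact hu
    · exact hv
    · have hTT : T' = T := by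
        by_contra hne
        have h2 : ({u, v} : Finset V) ⊆ T' ∩ T := by
          intro x hx
          simp only [mem_insert, mem_singleton] at hx
          rcases hx with rfl | rfl
          · exact mem_inter.2 ⟨hsub (by simp), hu⟩
          · exact mem_inter.2 ⟨hsub (by simp), hv⟩
        have h3 := Finset.card_le_card h2
        rw [Finset.card_pair huv] at h3
        have h4 := hlin T' hT' T hT hne
        omega
      subst hTT
      exact hsub (by simp)
  · intro hp
    refine Or.inr ⟨T, hT, ?_⟩
    intro x hx
    simp only [mem_insert, mem_singleton] at hx
    rcases hx with rfl | rfl | rfl <;> assumption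

lemma hline_eq_pair {V : Type*} [Fintype V] [DecidableEq V] {H : Finset (Finset V)}
    {u v : V} (h : ∀ T ∈ H, ¬(u ∈ T ∧ v ∈ T)) : hline H u v = {u, v} := by
  have hf : Finset.univ.filter (fun p => ∃ T ∈ H, ({u, v, p} : Finset V) ⊆ T) = ∅ := by
    rw [filter_eq_empty_iff]
    rintro p -
    rintro ⟨T, hT, hsub⟩
    exact h T hT ⟨hsub (by simp), hsub (by simp)⟩
  rw [hline, hf, union_empty]

/-- `m(n, k) ≤ C(n,2) - f(n,k)·(C(k,2) - 1)` whenever `n ≥ k ≥ 2`. -/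
theorem stmt_9 (n k : ℕ) (hk : 2 ≤ k) (hkn : k ≤ n) :
    (mValue n k : ℤ) ≤ (n.choose 2 : ℤ) - (fValue n k : ℤ) * ((k.choose 2 : ℤ) - 1) := by
  classical
  -- obtain an extremal hypergraph realizing fValue
  set S : Set ℕ := { m | ∃ H : Finset (Finset (Fin n)),
    (∀ T ∈ H, T.card = k) ∧
    (∀ T₁ ∈ H, ∀ T₂ ∈ H, T₁ ≠ T₂ → (T₁ ∩ T₂).card ≤ 1) ∧ H.card = m } with hS
  have hne : S.Nonempty := ⟨0, ∅, by simp, by simp, rfl⟩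
  have hbdd : BddAbove S := by
    refine ⟨Fintype.card (Finset (Fin n)), ?_⟩
    rintro m ⟨H, -, -, hm⟩
    exact hm ▸ Finset.card_le_univ H
  have hmem : fValue n k ∈ S := Nat.sSup_mem hne hbdd
  obtain ⟨H, hunif, hlin, hcard⟩ := hmem
  -- every line has at most k vertices
  have hbound : ∀ u v : Fin n, u ≠ v → (hline H u v).card ≤ k := by
    intro u v huv
    by_cases h : ∃ T ∈ H, u ∈ T ∧ v ∈ T
    · obtain ⟨T, hT, hu, hv⟩ := h
      rw [hline_eq_of_mem hlin huv hT hu hv, hunif T hT]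
    · push_neg at h
      rw [hline_eq_pair (fun T hT hc => h T hT hc.1 hc.2), Finset.card_pair huv]
      exact hk
  have h1 : mValue n k ≤ (hlines H).card := Nat.sInf_le ⟨H, hbound, rfl⟩
  -- covered and uncovered pairs
  set p : Finset (Fin n) → Prop := fun e => ∃ T ∈ H, e ⊆ T with hp
  set C : Finset (Finset (Fin n)) :=
    (Finset.univ.powersetCard 2).filter p with hC
  set B : Finset (Finset (Fin n)) :=
    (Finset.univ.powersetCard 2).filter (fun e => ¬ p e) with hB
  have h3 : C.card + B.card = n.choose 2 := by
    rw [hC, hB, Finset.card_filter_add_card_filter_not,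
      Finset.card_powersetCard, Finset.card_univ, Fintype.card_fin]
  -- lines are either edges or uncovered pairs
  have hsub : hlines H ⊆ H ∪ B := by
    intro ℓ hℓ
    simp only [hlines, mem_image, mem_filter, mem_product, mem_univ, true_and] at hℓ
    obtain ⟨⟨u, v⟩, huv, rfl⟩ := hℓ
    by_cases h : ∃ T ∈ H, u ∈ T ∧ v ∈ T
    · obtain ⟨T, hT, hu, hv⟩ := h
      rw [hline_eq_of_mem hlin huv hT hu hv]
      exact mem_union_left _ hT
    · push_neg at h
      rw [hline_eq_pair (fun T hT hc => h T hT hc.1 hc.2)]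
      refine mem_union_right _ ?_
      rw [hB, mem_filter, mem_powersetCard]
      refine ⟨⟨subset_univ _, Finset.card_pair huv⟩, ?_⟩
      rintro ⟨T, hT, hsub'⟩
      exact h T hT (hsub' (by simp)) (hsub' (by simp))
  have h2 : (hlines H).card ≤ H.card + B.card :=
    le_trans (Finset.card_le_card hsub) (Finset.card_union_le _ _)
  -- covered pairs dominate edge count times C(k,2)
  have h4 : H.card * k.choose 2 ≤ C.card := by
    have hdisj : ∀ T₁ ∈ H, ∀ T₂ ∈ H, T₁ ≠ T₂ →
        Disjoint (T₁.powersetCard 2) (T₂.powersetCard 2) := by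
      intro T₁ h₁ T₂ h₂ hne12
      rw [Finset.disjoint_left]
      intro e he1 he2
      rw [mem_powersetCard] at he1 he2
      have hsub2 : e ⊆ T₁ ∩ T₂ := subset_inter he1.1 he2.1
      have := Finset.card_le_card hsub2
      have := hlin T₁ h₁ T₂ h₂ hne12
      omega
    have hle : H.biUnion (fun T => T.powersetCard 2) ⊆ C := by
      intro e he
      rw [mem_biUnion] at he
      obtain ⟨T, hT, heT⟩ := he
      rw [mem_powersetCard] at heT
      rw [hC, mem_filter, mem_powersetCard]
      exact ⟨⟨subset_univ _, heT.2⟩, T, hT, heT.1⟩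
    calc H.card * k.choose 2 = ∑ T ∈ H, (T.powersetCard 2).card := by
          rw [Finset.sum_congr rfl (fun T hT => by
            rw [Finset.card_powersetCard, hunif T hT]), Finset.sum_const, smul_eq_mul]
      _ = (H.biUnion (fun T => T.powersetCard 2)).card :=
          (Finset.card_biUnion hdisj).symm
      _ ≤ C.card := Finset.card_le_card hle
  -- conclude over ℤ
  have hf : (fValue n k : ℤ) = (H.card : ℤ) := by exact_mod_cast hcard.symm
  have h1' : (mValue n k : ℤ) ≤ ((hlines H).card : ℤ) := by exact_mod_cast h1
  have h2' : ((hlines H).card : ℤ) ≤ (H.card : ℤ) + (B.card : ℤ) := by exact_mod_cast h2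
  have h3' : (C.card : ℤ) + (B.card : ℤ) = (n.choose 2 : ℤ) := by exact_mod_cast h3
  have h4' : (H.card : ℤ) * (k.choose 2 : ℤ) ≤ (C.card : ℤ) := by exact_mod_cast h4
  rw [hf]
  nlinarith [h1', h2', h3', h4']
end

section
/- There exists a finite metric space (X, ρ) and pairs of distinct points u, v and x, y in X such that the line determined by u and v is a proper subset of the line determined by x and y. In particular, this holds for the five-point metric space X = {u, v, x, y, z} with ρ(u,v) = ρ(v,x) = ρ(x,y) = ρ(y,z) = ρ(z,u) = 1 and ρ(u,x) = ρ(v,y) = ρ(x,z) = ρ(y,u) = ρ(z,v) = 2, where the line determined by v and y is {v, x, y} and the line determined by x and y is {v, x, y, z}. -/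
/-- Metric betweenness: `b` lies between `a` and `c` iff `a, b, c` are three distinct
points and `dist a b + dist b c = dist a c`. -/
def mbtw {X : Type*} [MetricSpace X] (a b c : X) : Prop :=
  a ≠ b ∧ a ≠ c ∧ b ≠ c ∧ dist a b + dist b c = dist a c

/-- The line determined by two distinct points `u` and `v` of a metric space:
`{p : [puv]} ∪ {u} ∪ {p : [upv]} ∪ {v} ∪ {p : [uvp]}`. -/
def mline {X : Type*} [MetricSpace X] (u v : X) : Set X :=
  {p | mbtw p u v} ∪ {u} ∪ {p | mbtw u p v} ∪ {v} ∪ {p | mbtw u v p}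

/-- Cyclic (graph) distance on the 5-cycle. -/
def cyc5 (i j : Fin 5) : ℕ := min ((i.val + 5 - j.val) % 5) ((j.val + 5 - i.val) % 5)

lemma cyc5_self (i : Fin 5) : cyc5 i i = 0 := by fin_cases i <;> decide

lemma cyc5_comm (i j : Fin 5) : cyc5 i j = cyc5 j i := by
  unfold cyc5; exact min_comm _ _

lemma cyc5_triangle : ∀ i j k : Fin 5, cyc5 i k ≤ cyc5 i j + cyc5 j k := by decide

lemma cyc5_eq_zero : ∀ i j : Fin 5, cyc5 i j = 0 → i = j := by decide

noncomputable instance metric5 : MetricSpace (Fin 5) where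
  dist i j := (cyc5 i j : ℝ)
  dist_self i := by simp [cyc5_self]
  dist_comm i j := by simp [cyc5_comm i j]
  dist_triangle i j k := by
    show (cyc5 i k : ℝ) ≤ (cyc5 i j : ℝ) + (cyc5 j k : ℝ)
    exact_mod_cast cyc5_triangle i j k
  eq_of_dist_eq_zero := by
    intro i j h
    have h' : (cyc5 i j : ℝ) = 0 := h
    exact cyc5_eq_zero i j (by exact_mod_cast h')

lemma dist5 (i j : Fin 5) : dist i j = (cyc5 i j : ℝ) := rfl

lemma mbtw_iff (a b c : Fin 5) :
    mbtw a b c ↔ (a ≠ b ∧ a ≠ c ∧ b ≠ c ∧ cyc5 a b + cyc5 b c = cyc5 a c) := by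
  unfold mbtw
  refine and_congr Iff.rfl (and_congr Iff.rfl (and_congr Iff.rfl ?_))
  rw [dist5, dist5, dist5]
  exact_mod_cast Iff.rfl

/-- There is a finite metric space in which one line is a proper subset of another:
namely the five-point space with the indicated distances, in which the line through
`v, y` is `{v, x, y}` and the line through `x, y` is `{v, x, y, z}`. -/
theorem stmt_10 : ∃ (X : Type) (_ : MetricSpace X) (_ : Fintype X) (u v x y z : X),
    dist u v = 1 ∧ dist v x = 1 ∧ dist x y = 1 ∧ dist y z = 1 ∧ dist z u = 1 ∧
    dist u x = 2 ∧ dist v y = 2 ∧ dist x z = 2 ∧ dist y u = 2 ∧ dist z v = 2 ∧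
    mline v y = {v, x, y} ∧ mline x y = {v, x, y, z} ∧
    mline v y ⊂ mline x y := by
  refine ⟨Fin 5, metric5, inferInstance, 0, 1, 2, 3, 4, ?_, ?_, ?_, ?_, ?_, ?_, ?_, ?_, ?_, ?_,
    ?_, ?_, ?_⟩
  · rw [dist5, show cyc5 0 1 = 1 from by decide]; norm_num
  · rw [dist5, show cyc5 1 2 = 1 from by decide]; norm_num
  · rw [dist5, show cyc5 2 3 = 1 from by decide]; norm_num
  · rw [dist5, show cyc5 3 4 = 1 from by decide]; norm_num
  · rw [dist5, show cyc5 4 0 = 1 from by decide]; norm_num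
  · rw [dist5, show cyc5 0 2 = 2 from by decide]; norm_num
  · rw [dist5, show cyc5 1 3 = 2 from by decide]; norm_num
  · rw [dist5, show cyc5 2 4 = 2 from by decide]; norm_num
  · rw [dist5, show cyc5 3 0 = 2 from by decide]; norm_num
  · rw [dist5, show cyc5 4 1 = 2 from by decide]; norm_num
  · ext p
    simp only [mline, Set.mem_union, Set.mem_setOf_eq, Set.mem_singleton_iff,
      Set.mem_insert_iff, mbtw_iff]
    fin_cases p <;> decide
  · ext p
    simp only [mline, Set.mem_union, Set.mem_setOf_eq, Set.mem_singleton_iff,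
      Set.mem_insert_iff, mbtw_iff]
    fin_cases p <;> decide
  · constructor
    · intro p hp
      simp only [mline, Set.mem_union, Set.mem_setOf_eq, Set.mem_singleton_iff,
        mbtw_iff] at hp ⊢
      fin_cases p <;> revert hp <;> decide
    · intro h
      have h4 : (4 : Fin 5) ∈ mline (2 : Fin 5) 3 := by
        simp only [mline, Set.mem_union, Set.mem_setOf_eq, Set.mem_singleton_iff, mbtw_iff]
        decide
      have h4' : (4 : Fin 5) ∈ mline (1 : Fin 5) 3 := h h4
      simp only [mline, Set.mem_union, Set.mem_setOf_eq, Set.mem_singleton_iff,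
        mbtw_iff] at h4'
      revert h4'; decide
end

section
/- For every integer n > 5, there is a metric space on n points where each closure-line consists of at most n−2 points and there are precisely 7 distinct closure-lines altogether. Such a metric space is given by the n points x₁ = (1,3), x₂ = (2,4), x₃ = (3,1), x₄ = (4,2), and x_k = (k, n+5−k) for 5 ≤ k ≤ n, with the L¹ metric ρ((a₁,a₂),(b₁,b₂)) = |a₁−b₁| + |a₂−b₂|. -/
/-- The edge set of the hypergraph associated with a metric space `X`:
all sets `{a, b, c}` with `[abc]`. -/
def metricEdges (X : Type*) [MetricSpace X] : Set (Set X) :=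
  {e | ∃ a b c : X, mbtw a b c ∧ e = {a, b, c}}

/-- A set `T` of vertices of a hypergraph with edge set `E` is affinely closed iff
every edge sharing at least two vertices with `T` is fully contained in `T`. -/
def AffClosed {α : Type*} (E : Set (Set α)) (T : Set α) : Prop :=
  ∀ e ∈ E, 2 ≤ (e ∩ T).ncard → e ⊆ T

/-- The affine closure of a set `S`: the intersection of all affinely closed
supersets of `S`. -/
def affCl {α : Type*} (E : Set (Set α)) (S : Set α) : Set α :=
  ⋂₀ {T | S ⊆ T ∧ AffClosed E T}

/-- The closure-lines of a hypergraph: the sets `aff {u, v}` for distinct `u, v`. -/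
def closureLines {α : Type*} (E : Set (Set α)) : Set (Set α) :=
  {L | ∃ u v : α, u ≠ v ∧ L = affCl E {u, v}}

/-- The `n` points `x₁ = (1,3)`, `x₂ = (2,4)`, `x₃ = (3,1)`, `x₄ = (4,2)`, and
`x_k = (k, n+5-k)` for `5 ≤ k ≤ n`, in the plane with the `L¹` metric
(here `pts n j` is the point `x_{j+1}`). -/
noncomputable def pts (n : ℕ) : Fin n → WithLp 1 (ℝ × ℝ) := fun j =>
  (WithLp.equiv 1 (ℝ × ℝ)).symm <|
    if (j : ℕ) = 0 then ((1 : ℝ), (3 : ℝ))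
    else if (j : ℕ) = 1 then (2, 4)
    else if (j : ℕ) = 2 then (3, 1)
    else if (j : ℕ) = 3 then (4, 2)
    else ((((j : ℕ) + 1 : ℕ) : ℝ), (n : ℝ) + 5 - (((j : ℕ) + 1 : ℕ) : ℝ))

section Hypergraph

variable {α : Type*} {E : Set (Set α)} {S T : Set α}

lemma two_le_ncard_inter_triple_iff {a b c : α} (hab : a ≠ b) (hac : a ≠ c) (hbc : b ≠ c) :
    2 ≤ (({a, b, c} : Set α) ∩ T).ncard ↔ a ∈ T ∧ b ∈ T ∨ a ∈ T ∧ c ∈ T ∨ b ∈ T ∧ c ∈ T := by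
  change 1 < _ ↔ _
  rw [Set.one_lt_ncard_iff]
  constructor
  · rintro ⟨x, y, ⟨hx, hxT⟩, ⟨hy, hyT⟩, hxy⟩
    rcases hx with rfl | rfl | rfl <;> rcases hy with rfl | rfl | rfl <;> tauto
  · rintro (⟨ha, hb⟩ | ⟨ha, hc⟩ | ⟨hb, hc⟩)
    · exact ⟨a, b, Set.mem_inter (by simp) ha, Set.mem_inter (by simp) hb, hab⟩
    · exact ⟨a, c, Set.mem_inter (by simp) ha, Set.mem_inter (by simp) hc, hac⟩
    · exact ⟨b, c, Set.mem_inter (by simp) hb, Set.mem_inter (by simp) hc, hbc⟩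

lemma affCl_eq_of_least (hST : S ⊆ T) (hT : AffClosed E T)
    (hleast : ∀ T', S ⊆ T' → AffClosed E T' → T ⊆ T') : affCl E S = T :=
  subset_antisymm (Set.sInter_subset_of_mem (show S ⊆ T ∧ AffClosed E T from ⟨hST, hT⟩))
    (Set.subset_sInter fun T' hT' => hleast T' hT'.1 hT'.2)

end Hypergraph

lemma mbtw_coe_iff {X : Type*} [MetricSpace X] {s : Set X} {a b c : s} :
    mbtw a b c ↔ mbtw (a : X) b c := by
  simp only [mbtw, ne_eq, Subtype.ext_iff, Subtype.dist_eq]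

lemma mbtw_comm {X : Type*} [MetricSpace X] {a b c : X} : mbtw a b c ↔ mbtw c b a := by
  simp only [mbtw, dist_comm b a, dist_comm c b, dist_comm c a, add_comm (dist b c)]
  tauto

lemma WithLp.prod_one_dist_add_dist_eq_iff {α β : Type*} [PseudoMetricSpace α]
    [PseudoMetricSpace β] {p q r : WithLp 1 (α × β)} :
    dist p q + dist q r = dist p r ↔
      dist p.fst q.fst + dist q.fst r.fst = dist p.fst r.fst ∧
        dist p.snd q.snd + dist q.snd r.snd = dist p.snd r.snd := by
  simp only [WithLp.prod_dist_eq_add (p := 1) (by norm_num), ENNReal.toReal_one, Real.rpow_one,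
    div_one]
  have := dist_triangle p.fst q.fst r.fst
  have := dist_triangle p.snd q.snd r.snd
  exact ⟨fun h => ⟨by linarith, by linarith⟩, fun ⟨h₁, h₂⟩ => by linarith⟩

lemma Real.dist_add_dist_eq_iff {a b c : ℝ} : dist a b + dist b c = dist a c ↔ b ∈ Set.uIcc a c := by
  rw [_root_.dist_add_dist_eq_iff, ← mem_segment_iff_wbtw, segment_eq_uIcc]

lemma Nat.cast_mem_uIcc_iff {R : Type*} [Semiring R] [LinearOrder R] [IsStrictOrderedRing R]
    {a b c : ℕ} : (b : R) ∈ Set.uIcc (a : R) c ↔ b ∈ Set.uIcc a c := by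
  simp only [Set.mem_uIcc, Nat.cast_le]

-- For `j < n` the subtraction does not truncate.
def ycoord (n j : ℕ) : ℕ :=
  if j = 0 then 3 else if j = 1 then 4 else if j = 2 then 1 else if j = 3 then 2 else n + 4 - j

lemma pts_apply (n : ℕ) (j : Fin n) :
    pts n j = WithLp.toLp 1 ((((j : ℕ) + 1 : ℕ) : ℝ), ((ycoord n j : ℕ) : ℝ)) := by
  have := j.isLt
  unfold pts ycoord
  split_ifs <;> simp_all
  push_cast [Nat.cast_sub (show (j : ℕ) ≤ n + 4 by omega)]
  ring

lemma pts_injective (n : ℕ) : Function.Injective (pts n) := by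
  intro i j h
  have := congrArg WithLp.fst h
  simp only [pts_apply, WithLp.toLp_fst, Nat.cast_inj] at this
  omega

def IdxBtw (i j k : ℕ) : Prop :=
  i < j ∧ j < k ∧ (4 ≤ i ∨ (i = 0 ∧ j = 1 ∨ i = 2 ∧ j = 3) ∧ 4 ≤ k)

lemma ycoord_mem_uIcc_iff {n i j k : ℕ} (hij : i < j) (hjk : j < k) (hkn : k < n) :
    ycoord n j ∈ Set.uIcc (ycoord n i) (ycoord n k) ↔ IdxBtw i j k := by
  rw [Set.mem_uIcc]
  unfold ycoord IdxBtw
  split_ifs <;> omega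

lemma mbtw_pts_iff_of_lt {n : ℕ} {i j k : Fin n} (hik : (i : ℕ) < k) :
    mbtw (pts n i) (pts n j) (pts n k) ↔ IdxBtw i j k := by
  simp only [mbtw, ne_eq, (pts_injective n).eq_iff, Fin.ext_iff,
    WithLp.prod_one_dist_add_dist_eq_iff, Real.dist_add_dist_eq_iff]
  simp only [pts_apply, WithLp.toLp_fst, WithLp.toLp_snd, Nat.cast_mem_uIcc_iff,
    Set.uIcc_of_le (by omega : (i : ℕ) + 1 ≤ k + 1), Set.mem_Icc]
  constructor
  · rintro ⟨hij, -, hjk, hx, hy⟩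
    exact (ycoord_mem_uIcc_iff (by omega) (by omega) k.2).mp hy
  · intro h
    have hij := h.1
    have hjk := h.2.1
    exact ⟨by omega, by omega, by omega, by omega, (ycoord_mem_uIcc_iff hij hjk k.2).mpr h⟩

abbrev PtsSpace (n : ℕ) : Type := Set.range (pts n)

noncomputable def pt (n : ℕ) : Fin n ≃ PtsSpace n := Equiv.ofInjective (pts n) (pts_injective n)

noncomputable def idx {n : ℕ} (p : PtsSpace n) : ℕ := (pt n).symm p

def line (n : ℕ) (s : Set ℕ) : Set (PtsSpace n) := idx ⁻¹' s

section Points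

variable {n : ℕ}

@[simp] lemma idx_pt (i : Fin n) : idx (pt n i) = i := by simp [idx]

lemma idx_lt (p : PtsSpace n) : idx p < n := ((pt n).symm p).isLt

lemma idx_injective : Function.Injective (idx (n := n)) :=
  Fin.val_injective.comp (pt n).symm.injective

@[simp] lemma pt_mem_line {s : Set ℕ} {i : Fin n} : pt n i ∈ line n s ↔ (i : ℕ) ∈ s := by
  simp [line]

lemma line_idx_image (T : Set (PtsSpace n)) : line n (idx '' T) = T :=
  Set.preimage_image_eq T idx_injective

lemma mbtw_pt_iff_of_lt {i j k : Fin n} (hik : (i : ℕ) < k) :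
    mbtw (pt n i) (pt n j) (pt n k) ↔ IdxBtw i j k := by
  simpa [mbtw_coe_iff, pt] using mbtw_pts_iff_of_lt hik

lemma pt_ne_of_idxBtw {i j k : Fin n} (h : IdxBtw i j k) :
    pt n i ≠ pt n j ∧ pt n i ≠ pt n k ∧ pt n j ≠ pt n k := by
  obtain ⟨hij, hjk, -⟩ := h
  simp only [(pt n).injective.ne_iff, ne_eq, Fin.ext_iff]
  omega

lemma mem_metricEdges_iff {e : Set (PtsSpace n)} :
    e ∈ metricEdges (PtsSpace n) ↔
      ∃ i j k : Fin n, IdxBtw i j k ∧ e = {pt n i, pt n j, pt n k} := by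
  constructor
  · rintro ⟨a, b, c, habc, rfl⟩
    obtain ⟨i, rfl⟩ := (pt n).surjective a
    obtain ⟨j, rfl⟩ := (pt n).surjective b
    obtain ⟨k, rfl⟩ := (pt n).surjective c
    have hik : (i : ℕ) ≠ k := Fin.val_injective.ne ((pt n).injective.ne_iff.mp habc.2.1)
    rcases hik.lt_or_gt with hik | hki
    · exact ⟨i, j, k, (mbtw_pt_iff_of_lt hik).mp habc, rfl⟩
    · refine ⟨k, j, i, (mbtw_pt_iff_of_lt hki).mp (mbtw_comm.mp habc), ?_⟩
      rw [Set.pair_comm, Set.insert_comm, Set.pair_comm]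
  · rintro ⟨i, j, k, h, rfl⟩
    exact ⟨_, _, _, (mbtw_pt_iff_of_lt (h.1.trans h.2.1)).mpr h, rfl⟩

end Points

def IdxClosed (n : ℕ) (s : Set ℕ) : Prop :=
  ∀ ⦃i j k⦄, k < n → IdxBtw i j k →
    (i ∈ s ∧ j ∈ s ∨ i ∈ s ∧ k ∈ s ∨ j ∈ s ∧ k ∈ s) → i ∈ s ∧ j ∈ s ∧ k ∈ s

lemma affClosed_line_iff {n : ℕ} {s : Set ℕ} :
    AffClosed (metricEdges (PtsSpace n)) (line n s) ↔ IdxClosed n s := by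
  constructor
  · intro h i j k hk hijk hs
    let i' : Fin n := ⟨i, by unfold IdxBtw at hijk; omega⟩
    let j' : Fin n := ⟨j, by unfold IdxBtw at hijk; omega⟩
    obtain ⟨hij, hik, hjk⟩ := pt_ne_of_idxBtw (i := i') (j := j') (k := ⟨k, hk⟩) hijk
    have := h _ (mem_metricEdges_iff.mpr ⟨_, _, _, hijk, rfl⟩)
      ((two_le_ncard_inter_triple_iff hij hik hjk).mpr (by simpa [i', j'] using hs))
    simpa [Set.insert_subset_iff, i', j'] using this
  · intro h e he h2
    obtain ⟨i, j, k, hijk, rfl⟩ := mem_metricEdges_iff.mp he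
    obtain ⟨hij, hik, hjk⟩ := pt_ne_of_idxBtw hijk
    rw [two_le_ncard_inter_triple_iff hij hik hjk] at h2
    simpa [Set.insert_subset_iff] using h k.2 hijk (by simpa using h2)

-- `m / 2 = a / 2` says that `m` lies in the same block `{0, 1}` or `{2, 3}` as `a`.
def lineIdx (a b : ℕ) : Set ℕ :=
  if 4 ≤ a then {m | 4 ≤ m}
  else if 4 ≤ b ∨ a / 2 = b / 2 then {m | m / 2 = a / 2 ∨ 4 ≤ m}
  else {a, b}

lemma mem_lineIdx {a b : ℕ} (hab : a ≤ b) : a ∈ lineIdx a b ∧ b ∈ lineIdx a b := by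
  unfold lineIdx
  split_ifs <;>
    simp only [Set.mem_ofPred_eq, Set.mem_insert_iff, Set.mem_singleton_iff, true_or, or_true,
      true_and, and_true] <;> omega

lemma idxClosed_lineIdx {n a b : ℕ} : IdxClosed n (lineIdx a b) := by
  unfold lineIdx IdxClosed IdxBtw
  split_ifs <;> simp only [Set.mem_ofPred_eq, Set.mem_insert_iff, Set.mem_singleton_iff] <;> omega

lemma exists_notMem_lineIdx (a b : ℕ) : ∃ c ≤ 4, c ∉ lineIdx a b ∧ c + 1 ∉ lineIdx a b := by
  unfold lineIdx
  split_ifs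
  · exact ⟨0, by norm_num⟩
  · exact ⟨2 - 2 * (a / 2), by simp only [Set.mem_ofPred_eq]; omega⟩
  · exact ⟨4, by simp only [Set.mem_insert_iff, Set.mem_singleton_iff]; omega⟩

lemma lineIdx_mem {a b : ℕ} (hab : a < b) :
    lineIdx a b ∈ ({lineIdx 0 1, lineIdx 2 3, lineIdx 4 5, lineIdx 0 2, lineIdx 0 3, lineIdx 1 2,
      lineIdx 1 3} : Set (Set ℕ)) := by
  simp only [Set.mem_insert_iff, Set.mem_singleton_iff]
  rw [lineIdx]
  split_ifs with ha4 hblock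
  · simp [lineIdx]
  · obtain h | h : a / 2 = 0 ∨ a / 2 = 1 := by omega
    all_goals simp [lineIdx, h]
  · obtain ⟨rfl | rfl, rfl | rfl⟩ : (a = 0 ∨ a = 1) ∧ (b = 2 ∨ b = 3) := by omega
    all_goals simp [lineIdx]

lemma IdxClosed.tail_subset {n : ℕ} {t : Set ℕ} (ht : IdxClosed n t) {a b : ℕ} (ha4 : 4 ≤ a)
    (hab : a < b) (hbn : b < n) (ha : a ∈ t) (hb : b ∈ t) {m : ℕ} (hm4 : 4 ≤ m) (hmn : m < n) :
    m ∈ t := by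
  rcases lt_trichotomy m a with hma | rfl | ham
  · exact (ht hbn ⟨hma, hab, Or.inl hm4⟩ (Or.inr (Or.inr ⟨ha, hb⟩))).1
  · exact ha
  rcases lt_trichotomy m b with hmb | rfl | hbm
  · exact (ht hbn ⟨ham, hmb, Or.inl ha4⟩ (Or.inr (Or.inl ⟨ha, hb⟩))).2.1
  · exact hb
  · exact (ht hmn ⟨hab, hbm, Or.inl ha4⟩ (Or.inl ⟨ha, hb⟩)).2.2

lemma IdxClosed.lineIdx_subset {n : ℕ} {t : Set ℕ} (ht : IdxClosed n t) {a b : ℕ} (hab : a < b)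
    (hbn : b < n) (ha : a ∈ t) (hb : b ∈ t) {m : ℕ} (hmn : m < n) (hm : m ∈ lineIdx a b) :
    m ∈ t := by
  unfold lineIdx at hm
  split_ifs at hm with ha4 hblock
  · exact ht.tail_subset ha4 hab hbn ha hb hm hmn
  · obtain ⟨c, hc⟩ : ∃ c, c = 2 * (a / 2) := ⟨_, rfl⟩
    replace hc : (c = 0 ∨ c = 2) ∧ (a = c ∨ a = c + 1) := by omega
    have hcd : c ∈ t ∧ c + 1 ∈ t := by
      rcases hblock with hb4 | hblock
      · have hbtw : IdxBtw c (c + 1) b := ⟨by omega, by omega, Or.inr ⟨by omega, hb4⟩⟩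
        rcases hc.2 with rfl | rfl
        · exact (ht hbn hbtw (Or.inr (Or.inl ⟨ha, hb⟩))).imp_right And.left
        · exact (ht hbn hbtw (Or.inr (Or.inr ⟨ha, hb⟩))).imp_right And.left
      · rw [show c = a by omega, show a + 1 = b by omega]
        exact ⟨ha, hb⟩
    simp only [Set.mem_ofPred_eq] at hm
    rcases hm with hm | hm4
    · obtain rfl | rfl : m = c ∨ m = c + 1 := by omega
      exacts [hcd.1, hcd.2]
    · exact (ht hmn ⟨by omega, by omega, Or.inr ⟨by omega, hm4⟩⟩ (Or.inl hcd)).2.2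
  · obtain rfl | rfl := hm
    exacts [ha, hb]

section ClosureLines

variable {n : ℕ}

lemma affCl_pt_pair {a b : Fin n} (hab : (a : ℕ) < b) :
    affCl (metricEdges (PtsSpace n)) {pt n a, pt n b} = line n (lineIdx a b) := by
  refine affCl_eq_of_least ?_ (affClosed_line_iff.mpr idxClosed_lineIdx) ?_
  · simp [Set.insert_subset_iff, mem_lineIdx hab.le]
  · intro T hsub hT p hp
    have ht : IdxClosed n (idx '' T) := affClosed_line_iff.mp (by rwa [line_idx_image])
    obtain ⟨ha, hb⟩ := Set.insert_subset_iff.mp hsub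
    rw [← line_idx_image T]
    exact ht.lineIdx_subset hab b.2 ⟨_, ha, idx_pt a⟩ ⟨_, hb rfl, idx_pt b⟩ (idx_lt p) hp

lemma closureLines_eq : closureLines (metricEdges (PtsSpace n)) =
    {L | ∃ a b : Fin n, (a : ℕ) < b ∧ L = line n (lineIdx a b)} := by
  ext L
  constructor
  · rintro ⟨u, v, huv, rfl⟩
    obtain ⟨a, rfl⟩ := (pt n).surjective u
    obtain ⟨b, rfl⟩ := (pt n).surjective v
    rcases (Fin.val_injective.ne ((pt n).injective.ne_iff.mp huv)).lt_or_gt with h | h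
    · exact ⟨a, b, h, affCl_pt_pair h⟩
    · exact ⟨b, a, h, by rw [Set.pair_comm, affCl_pt_pair h]⟩
  · rintro ⟨a, b, hab, rfl⟩
    exact ⟨pt n a, pt n b, (pt n).injective.ne (Fin.ne_of_lt hab), (affCl_pt_pair hab).symm⟩

lemma ncard_line_le {s : Set ℕ} {c d : ℕ} (hcd : c ≠ d) (hc : c < n) (hd : d < n)
    (hcs : c ∉ s) (hds : d ∉ s) : (line n s).ncard ≤ n - 2 := by
  have hsub : line n s ⊆ {pt n ⟨c, hc⟩, pt n ⟨d, hd⟩}ᶜ := by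
    rintro p hp (rfl | rfl) <;> simp_all
  calc (line n s).ncard ≤ ({pt n ⟨c, hc⟩, pt n ⟨d, hd⟩}ᶜ : Set (PtsSpace n)).ncard :=
        Set.ncard_le_ncard hsub
    _ = n - 2 := by
        rw [Set.ncard_compl, Set.ncard_pair ((pt n).injective.ne (by simp [hcd])),
          ← Nat.card_congr (pt n), Nat.card_fin]

lemma line_ne_line (hn : 5 < n) {s t : Set ℕ} (h : ∃ m < 6, ¬(m ∈ s ↔ m ∈ t)) :
    line n s ≠ line n t := by
  obtain ⟨m, hm, hst⟩ := h
  intro hl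
  exact hst (by simpa using congrArg (pt n ⟨m, by omega⟩ ∈ ·) hl)

lemma closureLines_eq_image (hn : 5 < n) : closureLines (metricEdges (PtsSpace n)) =
    line n '' {lineIdx 0 1, lineIdx 2 3, lineIdx 4 5, lineIdx 0 2, lineIdx 0 3, lineIdx 1 2,
      lineIdx 1 3} := by
  rw [closureLines_eq]
  ext L
  constructor
  · rintro ⟨a, b, hab, rfl⟩
    exact ⟨_, lineIdx_mem hab, rfl⟩
  · rintro ⟨s, hs, rfl⟩
    simp only [Set.mem_insert_iff, Set.mem_singleton_iff] at hs
    rcases hs with rfl | rfl | rfl | rfl | rfl | rfl | rfl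
    all_goals exact ⟨⟨_, by omega⟩, ⟨_, by omega⟩, by norm_num, rfl⟩

lemma ncard_closureLines (hn : 5 < n) : (closureLines (metricEdges (PtsSpace n))).ncard = 7 := by
  rw [closureLines_eq_image hn]
  simp only [Set.image_insert_eq, Set.image_singleton]
  rw [Set.ncard_insert_of_notMem, Set.ncard_insert_of_notMem, Set.ncard_insert_of_notMem,
    Set.ncard_insert_of_notMem, Set.ncard_insert_of_notMem, Set.ncard_insert_of_notMem,
    Set.ncard_singleton]
  all_goals simp only [Set.mem_insert_iff, Set.mem_singleton_iff, not_or]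
  all_goals repeat' apply And.intro
  all_goals exact line_ne_line hn (by simp [lineIdx]; decide)

lemma ncard_le_of_mem_closureLines {L : Set (PtsSpace n)}
    (hL : L ∈ closureLines (metricEdges (PtsSpace n))) (hn : 5 < n) : L.ncard ≤ n - 2 := by
  rw [closureLines_eq] at hL
  obtain ⟨a, b, -, rfl⟩ := hL
  obtain ⟨c, hc, h₀, h₁⟩ := exists_notMem_lineIdx a b
  exact ncard_line_le (by omega) (by omega) (by omega) h₀ h₁

end ClosureLines

/-- For every `n > 5`, the metric space consisting of the `n` points `pts n`
with the `L¹` metric has every closure-line of at most `n - 2` points and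
precisely `7` distinct closure-lines altogether. -/
theorem stmt_11 (n : ℕ) (hn : 5 < n) :
    Function.Injective (pts n) ∧
    (∀ L ∈ closureLines (metricEdges ↥(Set.range (pts n))), L.ncard ≤ n - 2) ∧
    (closureLines (metricEdges ↥(Set.range (pts n)))).ncard = 7 :=
  ⟨pts_injective n, fun _ hL => ncard_le_of_mem_closureLines hL hn, ncard_closureLines hn⟩
end

section
/- For every fixed integer k ≥ 2, the limit as n → ∞ of m̄(n, k) · k(k−1)/(n(n−1)) equals 1. -/
/-- `mbar n k` is the smallest number of distinct closure-lines in a hypergraph on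
`n` vertices in which every closure-line consists of at most `k` vertices. -/
noncomputable def mbar (n k : ℕ) : ℕ :=
  sInf { m | ∃ E : Set (Set (Fin n)),
    (∀ L ∈ closureLines E, L.ncard ≤ k) ∧ (closureLines E).ncard = m }

open Set Filter Topology

section LinearSpace

variable {α β : Type*}

lemma subset_affCl (E : Set (Set α)) (S : Set α) : S ⊆ affCl E S :=
  subset_sInter fun _ hT => hT.1

structure IsLinearSpace (k : ℕ) (L : Set (Set α)) : Prop where
  ncard_le : ∀ b ∈ L, b.ncard ≤ k
  pairwise_inter : L.Pairwise fun b b' => (b ∩ b').Subsingleton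
  exists_mem : ∀ u v : α, u ≠ v → ∃ b ∈ L, u ∈ b ∧ v ∈ b

instance Set.symm_inter_subsingleton : Std.Symm fun b b' : Set α => (b ∩ b').Subsingleton where
  symm b b' h := by rwa [inter_comm]

lemma Set.Pairwise.image_inter_subsingleton {L : Set (Set α)} {f : α → β}
    (hL : L.Pairwise fun b b' => (b ∩ b').Subsingleton) (hf : Function.Injective f) :
    (image f '' L).Pairwise fun b b' => (b ∩ b').Subsingleton := by
  rintro _ ⟨b, hb, rfl⟩ _ ⟨b', hb', rfl⟩ hne
  rw [← image_inter hf]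
  exact (hL hb hb' (ne_of_apply_ne _ hne)).image f

namespace IsLinearSpace

variable {k : ℕ} {L : Set (Set α)}

lemma affClosed [Finite α] (hL : IsLinearSpace k L) {b : Set α} (hb : b ∈ L) :
    AffClosed L b := by
  intro e he h2
  by_contra heb
  have := ncard_le_one_iff_subsingleton.2 (hL.pairwise_inter he hb (ne_of_not_le heb))
  omega

lemma affCl_pair [Finite α] (hL : IsLinearSpace k L) {b : Set α} (hb : b ∈ L) {u v : α}
    (huv : u ≠ v) (hu : u ∈ b) (hv : v ∈ b) : affCl L {u, v} = b := by
  refine subset_antisymm (sInter_subset_of_mem ⟨pair_subset hu hv, hL.affClosed hb⟩)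
    (subset_sInter fun T hT => hT.2 b hb ?_)
  calc 2 = ({u, v} : Set α).ncard := (ncard_pair huv).symm
    _ ≤ (b ∩ T).ncard := ncard_le_ncard (subset_inter (pair_subset hu hv) hT.1)

lemma closureLines_subset [Finite α] (hL : IsLinearSpace k L) : closureLines L ⊆ L := by
  rintro _ ⟨u, v, huv, rfl⟩
  obtain ⟨b, hb, hu, hv⟩ := hL.exists_mem u v huv
  rwa [hL.affCl_pair hb huv hu hv]

lemma ncard_le_of_mem_closureLines [Finite α] (hL : IsLinearSpace k L) :
    ∀ b ∈ closureLines L, b.ncard ≤ k :=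
  fun b hb => hL.ncard_le b (hL.closureLines_subset hb)

lemma image_equiv (hL : IsLinearSpace k L) (e : α ≃ β) :
    IsLinearSpace k (image e '' L) where
  ncard_le := by
    rintro _ ⟨b, hb, rfl⟩
    rw [ncard_image_of_injective _ e.injective]
    exact hL.ncard_le b hb
  pairwise_inter := hL.pairwise_inter.image_inter_subsingleton e.injective
  exists_mem u v huv := by
    obtain ⟨b, hb, hu, hv⟩ := hL.exists_mem (e.symm u) (e.symm v) (by simpa using huv)
    exact ⟨e '' b, mem_image_of_mem _ hb, ⟨_, hu, e.apply_symm_apply u⟩,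
      ⟨_, hv, e.apply_symm_apply v⟩⟩

end IsLinearSpace

def pairsThrough (W : Set α) : Set (Set α) :=
  {b | ∃ u ∈ W, ∃ v, u ≠ v ∧ b = {u, v}}

lemma inter_subsingleton_of_ncard_le_two [Finite α] {s t : Set α} (hs : s.ncard ≤ 2)
    (ht : t.ncard ≤ 2) (hst : s ≠ t) : (s ∩ t).Subsingleton := by
  by_contra h
  have h2 : 2 ≤ (s ∩ t).ncard := one_lt_ncard_iff_nontrivial.2 (not_subsingleton_iff.1 h)
  have hs' := eq_of_subset_of_ncard_le inter_subset_left (hs.trans h2)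
  have ht' := eq_of_subset_of_ncard_le inter_subset_right (ht.trans h2)
  exact hst (hs'.symm.trans ht')

lemma ncard_le_two_of_mem_pairsThrough {W : Set α} {b : Set α} (hb : b ∈ pairsThrough W) :
    b.ncard ≤ 2 := by
  obtain ⟨u, -, v, huv, rfl⟩ := hb
  exact (ncard_pair huv).le

lemma pairwise_pairsThrough [Finite α] (W : Set α) :
    (pairsThrough W).Pairwise fun b b' => (b ∩ b').Subsingleton :=
  fun _ hb _ hb' => inter_subsingleton_of_ncard_le_two (ncard_le_two_of_mem_pairsThrough hb)
    (ncard_le_two_of_mem_pairsThrough hb')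

lemma ncard_pairsThrough_le [Finite α] (W : Set α) :
    (pairsThrough W).ncard ≤ W.ncard * Nat.card α := by
  have hsub : pairsThrough W ⊆ range fun p : W × α => ({p.1.1, p.2} : Set α) := by
    rintro _ ⟨u, hu, v, -, rfl⟩
    exact ⟨(⟨u, hu⟩, v), rfl⟩
  calc (pairsThrough W).ncard ≤ _ := ncard_le_ncard hsub
    _ ≤ (univ : Set (W × α)).ncard := by rw [← image_univ]; exact ncard_image_le
    _ = W.ncard * Nat.card α := by rw [ncard_univ, Nat.card_prod, Nat.card_coe_set_eq]

lemma isLinearSpace_pairsThrough_univ [Finite α] {k : ℕ} (hk : 2 ≤ k) :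
    IsLinearSpace k (pairsThrough (univ : Set α)) where
  ncard_le _ hb := (ncard_le_two_of_mem_pairsThrough hb).trans hk
  pairwise_inter := pairwise_pairsThrough _
  exists_mem u v huv :=
    ⟨{u, v}, ⟨u, trivial, v, huv, rfl⟩, mem_insert u _, mem_insert_of_mem u rfl⟩

variable {k : ℕ} {L : Set (Set α)}

def adjoinPoints (L : Set (Set α)) (β : Type*) : Set (Set (α ⊕ β)) :=
  image Sum.inl '' L ∪ pairsThrough (range Sum.inr)

lemma IsLinearSpace.adjoinPoints [Finite α] [Finite β] (hk : 2 ≤ k) (hL : IsLinearSpace k L) :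
    IsLinearSpace k (adjoinPoints L β) where
  ncard_le := by
    rintro _ (⟨b, hb, rfl⟩ | hb)
    · rw [ncard_image_of_injective _ Sum.inl_injective]
      exact hL.ncard_le b hb
    · exact (ncard_le_two_of_mem_pairsThrough hb).trans hk
  pairwise_inter := by
    refine pairwise_union_of_symm.2 ⟨hL.pairwise_inter.image_inter_subsingleton
      Sum.inl_injective, pairwise_pairsThrough _, ?_⟩
    rintro _ ⟨b, -, rfl⟩ _ ⟨_, ⟨w, rfl⟩, v, -, rfl⟩ -
    refine (subsingleton_singleton (a := v)).anti ?_
    rintro _ ⟨⟨a, -, rfl⟩, hx | hx⟩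
    · cases hx
    · exact hx
  exists_mem u v huv := by
    rcases u with a | w
    · rcases v with a' | w'
      · obtain ⟨b, hb, ha, ha'⟩ := hL.exists_mem a a' (fun h => huv (congrArg _ h))
        exact ⟨_, Or.inl ⟨b, hb, rfl⟩, mem_image_of_mem _ ha, mem_image_of_mem _ ha'⟩
      · exact ⟨_, Or.inr ⟨_, mem_range_self w', _, huv.symm, rfl⟩, by simp, by simp⟩
    · exact ⟨_, Or.inr ⟨_, mem_range_self w, _, huv, rfl⟩, by simp, by simp⟩

lemma ncard_adjoinPoints_le [Finite α] [Finite β] (L : Set (Set α)) :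
    (adjoinPoints L β).ncard ≤ L.ncard + Nat.card β * (Nat.card α + Nat.card β) :=
  calc (adjoinPoints L β).ncard
      ≤ (image Sum.inl '' L).ncard + (pairsThrough (range (Sum.inr : β → α ⊕ β))).ncard :=
        ncard_union_le _ _
    _ ≤ L.ncard + (range (Sum.inr : β → α ⊕ β)).ncard * Nat.card (α ⊕ β) :=
        add_le_add ncard_image_le (ncard_pairsThrough_le _)
    _ = L.ncard + Nat.card β * (Nat.card α + Nat.card β) := by
        rw [ncard_range_of_injective Sum.inr_injective, Nat.card_sum]

section TransversalDesign

variable {R : Type*} [CommRing R]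

def tdBlock (k : ℕ) (a d : R) : Set (Fin k × R) :=
  range fun i : Fin k => (i, a + (i : ℕ) * d)

def filledTransversalDesign (k : ℕ) (L : Set (Set R)) : Set (Set (Fin k × R)) :=
  range (fun p : R × R => tdBlock k p.1 p.2) ∪ ⋃ g : Fin k, image (Prod.mk g) '' L

lemma mem_tdBlock {a d : R} {p : Fin k × R} : p ∈ tdBlock k a d ↔ p.2 = a + (p.1 : ℕ) * d :=
  ⟨by rintro ⟨i, rfl⟩; rfl, fun h => ⟨p.1, Prod.ext rfl h.symm⟩⟩

lemma ncard_tdBlock (a d : R) : (tdBlock k a d).ncard = k := by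
  rw [tdBlock, ncard_range_of_injective fun i j h => congrArg Prod.fst h, Nat.card_fin]

lemma isUnit_natCast_sub (hunit : ∀ c : ℕ, 0 < c → c < k → IsUnit (c : R)) {i j : Fin k}
    (hij : i ≠ j) : IsUnit (((i : ℕ) : R) - (j : ℕ)) := by
  wlog h : j < i generalizing i j
  · rw [← neg_sub, IsUnit.neg_iff]
    exact this hij.symm (lt_of_le_of_ne (not_lt.1 h) hij)
  rw [← Nat.cast_sub h.le]
  exact hunit _ (by omega) (by omega)

lemma tdBlock_inter_subsingleton (hunit : ∀ c : ℕ, 0 < c → c < k → IsUnit (c : R))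
    {a d a' d' : R} (hne : (a, d) ≠ (a', d')) :
    (tdBlock k a d ∩ tdBlock k a' d').Subsingleton := by
  rintro ⟨i, x⟩ ⟨hx, hx'⟩ ⟨j, y⟩ ⟨hy, hy'⟩
  simp only [mem_tdBlock] at hx hx' hy hy'
  obtain rfl | hij := eq_or_ne i j
  · rw [hx, hy]
  refine absurd ?_ hne
  have hdd : d = d' := by
    refine sub_eq_zero.1 ((isUnit_natCast_sub hunit hij).mul_right_eq_zero.1 ?_)
    linear_combination hx' - hx - hy' + hy
  subst hdd
  rw [add_right_cancel (hx.symm.trans hx')]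

lemma exists_tdBlock (hunit : ∀ c : ℕ, 0 < c → c < k → IsUnit (c : R)) {i j : Fin k}
    (hij : i ≠ j) (x y : R) :
    ∃ a d : R, (i, x) ∈ tdBlock k a d ∧ (j, y) ∈ tdBlock k a d := by
  obtain ⟨w, hw⟩ := (isUnit_natCast_sub hunit hij).exists_right_inv
  refine ⟨x - (i : ℕ) * (w * (x - y)), w * (x - y), ?_, ?_⟩ <;> rw [mem_tdBlock]
  · ring
  · linear_combination (x - y) * hw

lemma tdBlock_inter_image_mk_subsingleton (a d : R) (g : Fin k) (c : Set R) :
    (tdBlock k a d ∩ Prod.mk g '' c).Subsingleton := by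
  rintro _ ⟨hx, x, -, rfl⟩ _ ⟨hy, y, -, rfl⟩
  simp only [mem_tdBlock] at hx hy
  rw [hx, hy]

lemma IsLinearSpace.filledTransversalDesign {L : Set (Set R)} (hL : IsLinearSpace k L)
    (hunit : ∀ c : ℕ, 0 < c → c < k → IsUnit (c : R)) :
    IsLinearSpace k (filledTransversalDesign k L) where
  ncard_le := by
    rintro _ (⟨⟨a, d⟩, rfl⟩ | hb)
    · exact (ncard_tdBlock a d).le
    · obtain ⟨g, b, hbL, rfl⟩ := mem_iUnion.1 hb
      rw [ncard_image_of_injective _ (Prod.mk_right_injective g)]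
      exact hL.ncard_le b hbL
  pairwise_inter := by
    refine pairwise_union_of_symm.2 ⟨?_, ?_, ?_⟩
    · rintro _ ⟨⟨a, d⟩, rfl⟩ _ ⟨⟨a', d'⟩, rfl⟩ hne
      exact tdBlock_inter_subsingleton hunit fun h => hne (by rw [h])
    · intro _ hb _ hb' hne
      obtain ⟨g, b, hbL, rfl⟩ := mem_iUnion.1 hb
      obtain ⟨g', b', hbL', rfl⟩ := mem_iUnion.1 hb'
      rintro _ ⟨⟨x, hx, rfl⟩, x', hx', hxx⟩ _ ⟨⟨y, hy, rfl⟩, y', hy', hyy⟩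
      simp only [Prod.mk.injEq] at hxx hyy
      obtain ⟨rfl, rfl⟩ := hxx
      obtain ⟨-, rfl⟩ := hyy
      have hbb : b ≠ b' := by rintro rfl; exact hne rfl
      rw [hL.pairwise_inter hbL hbL' hbb ⟨hx, hx'⟩ ⟨hy, hy'⟩]
    · rintro _ ⟨⟨a, d⟩, rfl⟩ _ hb -
      obtain ⟨g, b, -, rfl⟩ := mem_iUnion.1 hb
      exact tdBlock_inter_image_mk_subsingleton a d g b
  exists_mem := by
    rintro ⟨i, x⟩ ⟨j, y⟩ hne
    obtain rfl | hij := eq_or_ne i j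
    · obtain ⟨b, hb, hx, hy⟩ := hL.exists_mem x y fun h => hne (by rw [h])
      exact ⟨_, Or.inr (mem_iUnion.2 ⟨i, b, hb, rfl⟩), mem_image_of_mem _ hx,
        mem_image_of_mem _ hy⟩
    · obtain ⟨a, d, hx, hy⟩ := exists_tdBlock hunit hij x y
      exact ⟨_, Or.inl ⟨(a, d), rfl⟩, hx, hy⟩

lemma ncard_filledTransversalDesign_le [Finite R] (L : Set (Set R)) :
    (filledTransversalDesign k L).ncard ≤ Nat.card R ^ 2 + k * L.ncard := by
  refine (ncard_union_le _ _).trans (add_le_add ?_ ?_)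
  · calc _ ≤ (univ : Set (R × R)).ncard := by rw [← image_univ]; exact ncard_image_le
      _ = Nat.card R ^ 2 := by rw [ncard_univ, Nat.card_prod, sq]
  · calc _ ≤ ∑ g : Fin k, (image (Prod.mk g) '' L).ncard := ncard_iUnion_le_of_fintype _
      _ ≤ ∑ _g : Fin k, L.ncard := Finset.sum_le_sum fun _ _ => ncard_image_le
      _ = k * L.ncard := by simp

end TransversalDesign

lemma card_mul_pred_le_ncard_closureLines_mul [Finite α] {k : ℕ} (E : Set (Set α))
    (hE : ∀ L ∈ closureLines E, L.ncard ≤ k) :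
    Nat.card α * (Nat.card α - 1) ≤ (closureLines E).ncard * (k * (k - 1)) := by
  classical
  have := Fintype.ofFinite α
  have hfiber : ∀ L ∈ (closureLines E).toFinset,
      {p ∈ (Finset.univ : Finset α).offDiag | affCl E {p.1, p.2} = L}.card ≤ k * (k - 1) := by
    intro L hL
    have hLk : L.toFinset.card ≤ k := by
      rw [← ncard_eq_toFinset_card']
      exact hE L (mem_toFinset.1 hL)
    calc _ ≤ L.toFinset.offDiag.card := Finset.card_le_card fun p hp => by
          obtain ⟨hp', rfl⟩ := Finset.mem_filter.1 hp
          obtain ⟨-, -, hne⟩ := Finset.mem_offDiag.1 hp'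
          simp only [Finset.mem_offDiag, mem_toFinset]
          exact ⟨subset_affCl _ _ (mem_insert _ _),
            subset_affCl _ _ (mem_insert_of_mem _ rfl), hne⟩
      _ = L.toFinset.card * (L.toFinset.card - 1) := by rw [Finset.offDiag_card, Nat.mul_sub_one]
      _ ≤ k * (k - 1) := Nat.mul_le_mul hLk (Nat.sub_le_sub_right hLk 1)
  calc Nat.card α * (Nat.card α - 1) = (Finset.univ : Finset α).offDiag.card := by
        rw [Finset.offDiag_card, Finset.card_univ, Nat.card_eq_fintype_card, Nat.mul_sub_one]
    _ ≤ k * (k - 1) * (closureLines E).toFinset.card :=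
        Finset.card_le_mul_card_image_of_maps_to
          (fun p hp => mem_toFinset.2
            (⟨p.1, p.2, (Finset.mem_offDiag.1 hp).2.2, rfl⟩ : _ ∈ closureLines E)) _ hfiber
    _ = (closureLines E).ncard * (k * (k - 1)) := by rw [ncard_eq_toFinset_card', mul_comm]

noncomputable def linearSpaceNum (k n : ℕ) : ℕ :=
  sInf {r | ∃ L : Set (Set (Fin n)), IsLinearSpace k L ∧ L.ncard = r}

section LinearSpaceNum

variable {k : ℕ}

lemma linearSpaceNum_le_ncard [Finite α] {L : Set (Set α)} (hL : IsLinearSpace k L) :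
    linearSpaceNum k (Nat.card α) ≤ L.ncard := by
  let e := Finite.equivFin α
  apply Nat.sInf_le
  exact ⟨_, hL.image_equiv e, ncard_image_of_injective _ (image_injective.2 e.injective)⟩

lemma exists_isLinearSpace_ncard_eq_linearSpaceNum (hk : 2 ≤ k) (n : ℕ) :
    ∃ L : Set (Set (Fin n)), IsLinearSpace k L ∧ L.ncard = linearSpaceNum k n :=
  Nat.sInf_mem (s := {r | ∃ L : Set (Set (Fin n)), IsLinearSpace k L ∧ L.ncard = r})
    ⟨_, _, isLinearSpace_pairsThrough_univ hk, rfl⟩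

lemma linearSpaceNum_le_sq (hk : 2 ≤ k) (n : ℕ) : linearSpaceNum k n ≤ n ^ 2 := by
  have h := linearSpaceNum_le_ncard (isLinearSpace_pairsThrough_univ (α := Fin n) hk)
  rw [Nat.card_fin] at h
  refine h.trans ((ncard_pairsThrough_le _).trans ?_)
  rw [ncard_univ, Nat.card_fin, sq]

lemma linearSpaceNum_mul_add_le (hk : 2 ≤ k) (m s : ℕ) [NeZero m]
    (hunit : ∀ c : ℕ, 0 < c → c < k → IsUnit (c : ZMod m)) :
    linearSpaceNum k (k * m + s) ≤ m ^ 2 + k * linearSpaceNum k m + s * (k * m + s) := by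
  obtain ⟨L, hL, hcard⟩ := exists_isLinearSpace_ncard_eq_linearSpaceNum hk m
  let e := (ZMod.finEquiv m).toEquiv
  have hcard' : (image e '' L).ncard = linearSpaceNum k m := by
    rw [ncard_image_of_injective _ (image_injective.2 e.injective), hcard]
  have h := linearSpaceNum_le_ncard
    (((hL.image_equiv e).filledTransversalDesign hunit).adjoinPoints (β := Fin s) hk)
  simp only [Nat.card_sum, Nat.card_prod, Nat.card_fin, Nat.card_zmod] at h
  refine h.trans ((ncard_adjoinPoints_le _).trans ?_)
  simp only [Nat.card_prod, Nat.card_fin, Nat.card_zmod]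
  have := ncard_filledTransversalDesign_le (k := k) (image e '' L)
  rw [Nat.card_zmod, hcard'] at this
  omega

end LinearSpaceNum

end LinearSpace

lemma mbar_le_linearSpaceNum {k : ℕ} (hk : 2 ≤ k) (n : ℕ) :
    mbar n k ≤ linearSpaceNum k n := by
  obtain ⟨L, hL, hcard⟩ := exists_isLinearSpace_ncard_eq_linearSpaceNum hk n
  calc mbar n k ≤ (closureLines L).ncard :=
        Nat.sInf_le ⟨L, hL.ncard_le_of_mem_closureLines, rfl⟩
    _ ≤ L.ncard := ncard_le_ncard hL.closureLines_subset
    _ = linearSpaceNum k n := hcard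

lemma exists_closureLines_ncard_eq_mbar {k : ℕ} (hk : 2 ≤ k) (n : ℕ) :
    ∃ E : Set (Set (Fin n)),
      (∀ L ∈ closureLines E, L.ncard ≤ k) ∧ (closureLines E).ncard = mbar n k :=
  Nat.sInf_mem (s := {m | ∃ E : Set (Set (Fin n)),
      (∀ L ∈ closureLines E, L.ncard ≤ k) ∧ (closureLines E).ncard = m})
    ⟨_, _, (isLinearSpace_pairsThrough_univ hk).ncard_le_of_mem_closureLines, rfl⟩

lemma mul_pred_le_mbar_mul {k : ℕ} (hk : 2 ≤ k) (n : ℕ) :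
    (n : ℝ) * (n - 1) ≤ mbar n k * (k * (k - 1)) := by
  obtain ⟨E, hE, hcard⟩ := exists_closureLines_ncard_eq_mbar hk n
  have h := card_mul_pred_le_ncard_closureLines_mul E hE
  rw [Nat.card_fin, hcard] at h
  rcases Nat.eq_zero_or_pos n with rfl | hn
  · have : (1 : ℝ) ≤ k := by exact_mod_cast (by omega : 1 ≤ k)
    simpa using mul_nonneg (Nat.cast_nonneg _) (mul_nonneg (by linarith) (by linarith))
  have h' : ((n * (n - 1) : ℕ) : ℝ) ≤ (mbar n k * (k * (k - 1)) : ℕ) := by exact_mod_cast h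
  push_cast [Nat.cast_sub hn, Nat.cast_sub (by omega : 1 ≤ k)] at h'
  exact h'

lemma isUnit_natCast_zmod_factorial_mul_add_one {k c : ℕ} (q : ℕ) (hc : 0 < c) (hck : c < k) :
    IsUnit (c : ZMod ((k - 1).factorial * q + 1)) := by
  rw [ZMod.isUnit_iff_coprime]
  obtain ⟨r, hr⟩ := Nat.dvd_factorial hc (by omega : c ≤ k - 1)
  rw [hr, mul_assoc, Nat.coprime_mul_left_add_right]
  exact Nat.coprime_one_right c

lemma exists_quadratic_bound_of_recurrence {k M : ℕ} (hk : 2 ≤ k) (hM : 0 < M) {f : ℕ → ℕ}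
    (hsq : ∀ n, f n ≤ n ^ 2)
    (hrec : ∀ q s, f (k * (M * q + 1) + s) ≤
      (M * q + 1) ^ 2 + k * f (M * q + 1) + s * (k * (M * q + 1) + s))
    (t : ℕ) :
    ∃ A : ℕ, ∀ n, (f n : ℝ) ≤ (1 / (k * (k - 1)) + 1 / k ^ t) * n ^ 2 + A * n := by
  have hk' : (2 : ℝ) ≤ k := by exact_mod_cast hk
  have hc₀ : 0 ≤ 1 / ((k : ℝ) * (k - 1)) :=
    div_nonneg zero_le_one (mul_nonneg (by linarith) (by linarith))
  induction t with
  | zero =>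
    refine ⟨0, fun n => ?_⟩
    have : (f n : ℝ) ≤ n ^ 2 := by exact_mod_cast hsq n
    simp only [pow_zero, div_one, CharP.cast_eq_zero, zero_mul, add_zero]
    nlinarith
  | succ t ih =>
    obtain ⟨A, hA⟩ := ih
    set c := 1 / ((k : ℝ) * (k - 1)) + 1 / k ^ t
    set c' := 1 / ((k : ℝ) * (k - 1)) + 1 / k ^ (t + 1)
    have hc' : 0 ≤ c' := add_nonneg hc₀ (by positivity)
    refine ⟨A + k * M + k, fun n => ?_⟩
    push_cast
    have hn : (0 : ℝ) ≤ n := n.cast_nonneg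
    have hAM : (0 : ℝ) ≤ A + k * M := by positivity
    rcases lt_or_ge n k with hnk | hkn
    · have h1 : (f n : ℝ) ≤ n ^ 2 := by exact_mod_cast hsq n
      have h2 : (n : ℝ) ^ 2 ≤ k * n := by
        rw [sq]; exact mul_le_mul_of_nonneg_right (by exact_mod_cast hnk.le) hn
      nlinarith [mul_nonneg hc' (sq_nonneg (n : ℝ)), mul_nonneg hAM hn]
    obtain ⟨q, s, rfl, hs⟩ : ∃ q s, n = k * (M * q + 1) + s ∧ s < k * M := by
      refine ⟨(n - k) / (k * M), (n - k) % (k * M), ?_, Nat.mod_lt _ (by positivity)⟩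
      have := Nat.div_add_mod (n - k) (k * M)
      rw [mul_add, mul_one, ← mul_assoc]
      omega
    set m := M * q + 1
    push_cast
    have hrec' : (f (k * m + s) : ℝ) ≤ m ^ 2 + k * f m + s * (k * m + s) := by
      exact_mod_cast hrec q s
    have hcoef : (1 + k * c) * m ^ 2 = c' * (k * m) ^ 2 := by
      have : (k : ℝ) - 1 ≠ 0 := by linarith
      simp only [c, c']
      field_simp
      ring
    have hs' : (s : ℝ) ≤ k * M := by exact_mod_cast hs.le
    have hkm : (0 : ℝ) ≤ k * m := by positivity
    have hs0 : (0 : ℝ) ≤ s := s.cast_nonneg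
    calc (f (k * m + s) : ℝ) ≤ m ^ 2 + k * (c * m ^ 2 + A * m) + s * (k * m + s) := by
          nlinarith [hA m]
      _ = c' * (k * m) ^ 2 + A * (k * m) + s * (k * m + s) := by rw [← hcoef]; ring
      _ ≤ c' * (k * m + s) ^ 2 + (A + k * M + k) * (k * m + s) := by
          nlinarith [mul_le_mul_of_nonneg_right hs' (add_nonneg hkm hs0),
            mul_nonneg hc' (add_nonneg (mul_nonneg (mul_nonneg zero_le_two hkm) hs0)
              (sq_nonneg (s : ℝ))),
            mul_nonneg A.cast_nonneg hs0, mul_nonneg k.cast_nonneg (add_nonneg hkm hs0)]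

lemma exists_mbar_le {k : ℕ} (hk : 2 ≤ k) {ε : ℝ} (hε : 0 < ε) :
    ∃ A : ℝ, ∀ n, (mbar n k : ℝ) ≤ (1 / (k * (k - 1)) + ε) * n ^ 2 + A * n := by
  obtain ⟨t, ht⟩ : ∃ t, 1 / (k : ℝ) ^ t < ε := by
    simpa only [one_div_pow] using exists_pow_lt_of_lt_one hε
      ((div_lt_one (by positivity)).2 (by exact_mod_cast hk : (1 : ℝ) < k))
  obtain ⟨A, hA⟩ := exists_quadratic_bound_of_recurrence hk (Nat.factorial_pos (k - 1))
    (linearSpaceNum_le_sq hk) (fun q s => linearSpaceNum_mul_add_le hk _ s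
      fun _ hc hck => isUnit_natCast_zmod_factorial_mul_add_one q hc hck) t
  refine ⟨A, fun n => ?_⟩
  have h : (mbar n k : ℝ) ≤ linearSpaceNum k n := by exact_mod_cast mbar_le_linearSpaceNum hk n
  nlinarith [hA n, sq_nonneg (n : ℝ)]

lemma tendsto_div_mul_pred_of_bounds {u : ℕ → ℝ} {x : ℝ}
    (hlow : ∀ n, x * (n * (n - 1)) ≤ u n)
    (hup : ∀ ε > 0, ∃ A : ℝ, ∀ n, u n ≤ (x + ε) * n ^ 2 + A * n) :
    Tendsto (fun n : ℕ => u n / (n * (n - 1))) atTop (𝓝 x) := by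
  have hpos : ∀ᶠ n : ℕ in atTop, (0 : ℝ) < n * (n - 1) := by
    filter_upwards [eventually_ge_atTop 2] with n hn
    have : (2 : ℝ) ≤ n := by exact_mod_cast hn
    nlinarith
  refine tendsto_order.2 ⟨fun a ha => ?_, fun a ha => ?_⟩
  · filter_upwards [hpos] with n hn
    exact ha.trans_le ((le_div_iff₀ hn).2 (hlow n))
  obtain ⟨A, hA⟩ := hup ((a - x) / 2) (by linarith)
  set y := x + (a - x) / 2 with hy
  have hlim : Tendsto (fun n : ℕ => (y + A * (1 / n)) / (1 - 1 / n)) atTop (𝓝 y) := by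
    have h := tendsto_one_div_atTop_nhds_zero_nat (𝕜 := ℝ)
    have := ((tendsto_const_nhds (x := y)).add (h.const_mul A)).div (tendsto_const_nhds.sub h)
      (by norm_num : (1 : ℝ) - 0 ≠ 0)
    rwa [mul_zero, add_zero, sub_zero, div_one] at this
  have hya : y < a := by rw [hy]; linarith
  filter_upwards [hpos, hlim.eventually (gt_mem_nhds hya)] with n hn hlt
  have hn0 : (n : ℝ) ≠ 0 := by rintro h; simp [h] at hn
  calc u n / (n * (n - 1)) ≤ (y * n ^ 2 + A * n) / (n * (n - 1)) :=
        div_le_div_of_nonneg_right (hA n) hn.le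
    _ = (y + A * (1 / n)) / (1 - 1 / n) := by field_simp
    _ < a := hlt

/-- For every fixed `k ≥ 2`, `m̄(n, k) · k(k-1)/(n(n-1)) → 1` as `n → ∞`. -/
theorem stmt_13 (k : ℕ) (hk : 2 ≤ k) :
    Filter.Tendsto
      (fun n : ℕ => (mbar n k : ℝ) * ((k : ℝ) * ((k : ℝ) - 1)) / ((n : ℝ) * ((n : ℝ) - 1)))
      Filter.atTop (nhds 1) := by
  have hK : (0 : ℝ) < k * (k - 1) := by
    have : (2 : ℝ) ≤ k := by exact_mod_cast hk
    nlinarith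
  have hlim := tendsto_div_mul_pred_of_bounds (x := 1 / (k * (k - 1)))
    (fun n => by rw [one_div_mul_eq_div, div_le_iff₀ hK]; exact mul_pred_le_mbar_mul hk n)
    (fun ε hε => exists_mbar_le hk hε)
  convert hlim.const_mul ((k : ℝ) * (k - 1)) using 1
  · ext n
    ring
  · rw [mul_one_div_cancel hK.ne']
end
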